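/- Let T be a standard Young tableau of rectangular shape 4×b and 1 ≤ i ≤ 3. Then the anti-exceedance set Aexc(prom_i(T)) = { e : prom_i(T)^{-1}(e) > e } equals the set of entries of T lying in the first i rows. -/

import Mathlib

/-!
Follow an entry `e` of `T` through promotion: in `P^k(T)` it has become `e - k`, and each
promotion either keeps it in its row or, when the slide path steps down onto it, lifts it by one
row; after `e - 1` promotions it is the `1` in the top-left corner. The slide path of `P^{j-1}(T)`
steps from row `i - 1` down to row `i` exactly once, and `prom_i(T)(j) ≡ p^{i,j} + j - 1` modulo
`ab`, so for `j ≤ e` we have `prom_i(T)(j) = e` exactly when `e - (j - 1)` is the entry lifted out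
of row `i` of `P^{j-1}(T)`. An entry starting in row `i` or below is lifted out of row `i` on its
way to the top, at some `j < e`; an entry starting above row `i` never reaches row `i`, so its
preimage exceeds it.
-/

/-- `IsSYT a b T` says that `T` (restricted to the rectangular grid
`{0,…,a−1} × {0,…,b−1}`, rows indexed from the top and columns from the left) is a
standard Young tableau of rectangular shape `a × b`: a filling by the numbers
`1,…,ab`, each used exactly once, strictly increasing along each row and down each
column. -/
def IsSYT (a b : ℕ) (T : ℕ → ℕ → ℕ) : Prop :=
  (∀ i j, i < a → j < b → 1 ≤ T i j ∧ T i j ≤ a * b) ∧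
  (∀ k, 1 ≤ k → k ≤ a * b → ∃! p : ℕ × ℕ, p.1 < a ∧ p.2 < b ∧ T p.1 p.2 = k) ∧
  (∀ i j j', i < a → j < j' → j' < b → T i j < T i j') ∧
  (∀ i i' j, i < i' → i' < a → j < b → T i j < T i' j)

/-- One step of the jeu-de-taquin slide used in promotion: from a cell of the `a × b`
grid, move to the neighbour to the right or below carrying the smaller entry of `T`
(moving straight if only one of the two neighbours exists, and staying put at the
bottom-right corner). -/
def slideNext (a b : ℕ) (T : ℕ → ℕ → ℕ) (c : ℕ × ℕ) : ℕ × ℕ :=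
  if c.1 + 1 < a then
    if c.2 + 1 < b then
      if T (c.1 + 1) c.2 < T c.1 (c.2 + 1) then (c.1 + 1, c.2) else (c.1, c.2 + 1)
    else (c.1 + 1, c.2)
  else if c.2 + 1 < b then (c.1, c.2 + 1) else c

open Classical in
/-- Schützenberger promotion on fillings of the `a × b` grid: delete the entry `1`
(which for a standard tableau sits in the top-left cell `(0,0)`), slide the empty box
along the jeu-de-taquin path determined by `slideNext` until it reaches the
bottom-right corner, fill that corner with `ab + 1`, and subtract `1` from every
entry.  Cells outside the grid are left unchanged. -/
noncomputable def promo (a b : ℕ) (T : ℕ → ℕ → ℕ) : ℕ → ℕ → ℕ := fun i j =>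
  if i < a ∧ j < b then
    if i = a - 1 ∧ j = b - 1 then a * b
    else if ∃ t : ℕ, (slideNext a b T)^[t] (0, 0) = (i, j) then
      T (slideNext a b T (i, j)).1 (slideNext a b T (i, j)).2 - 1
    else T i j - 1
  else T i j

/-- Evacuation realized as rotate-and-complement:
`E(T)(i,j) = ab + 1 − T(a−1−i, b−1−j)` on the grid (0-indexed). -/
def evac (a b : ℕ) (T : ℕ → ℕ → ℕ) : ℕ → ℕ → ℕ := fun i j =>
  if i < a ∧ j < b then a * b + 1 - T (a - 1 - i) (b - 1 - j) else T i j

/-- `promoPermSpec a b i T σ` says that `σ` realizes the `i`-th promotion permutation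
`prom_i(T)` of a rectangular standard Young tableau `T` of shape `a × b` (rows of the
tableau are 0-indexed here, so the paper's rows `i` and `i+1` are rows `i−1` and `i`):
`σ` restricts to a bijection of `{1,…,ab}`, and for each `j ∈ {1,…,ab}` there is a step
`t` of the promotion slide path of `P^{j−1}(T)` at which the path moves down from row
`i−1` to row `i` — the entry `p^{i,j}` carried up at that step is the value of
`P^{j−1}(T)` at the cell below — and `σ(j) ≡ p^{i,j} + j − 1 (mod ab)`. -/
def promoPermSpec (a b i : ℕ) (T : ℕ → ℕ → ℕ) (σ : ℕ → ℕ) : Prop :=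
  Set.BijOn σ (Set.Icc 1 (a * b)) (Set.Icc 1 (a * b)) ∧
  ∀ j ∈ Set.Icc 1 (a * b), ∃ t : ℕ,
    (slideNext a b ((promo a b)^[j - 1] T)
        ((slideNext a b ((promo a b)^[j - 1] T))^[t] (0, 0))).1
      = ((slideNext a b ((promo a b)^[j - 1] T))^[t] (0, 0)).1 + 1 ∧
    ((slideNext a b ((promo a b)^[j - 1] T))^[t] (0, 0)).1 + 1 = i ∧
    σ j ≡ ((promo a b)^[j - 1] T) i
        ((slideNext a b ((promo a b)^[j - 1] T))^[t] (0, 0)).2 + j - 1 [MOD a * b]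

section SlidePath

variable {a b : ℕ} {U : ℕ → ℕ → ℕ}

def slidePath (a b : ℕ) (U : ℕ → ℕ → ℕ) (t : ℕ) : ℕ × ℕ := (slideNext a b U)^[t] (0, 0)

def OnSlidePath (a b : ℕ) (U : ℕ → ℕ → ℕ) (c : ℕ × ℕ) : Prop := ∃ t, slidePath a b U t = c

lemma slidePath_succ (t : ℕ) : slidePath a b U (t + 1) = slideNext a b U (slidePath a b U t) :=
  Function.iterate_succ_apply' _ _ _

lemma slideNext_cases {c : ℕ × ℕ} (hc1 : c.1 < a) (hc2 : c.2 < b) :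
    (c.1 + 1 < a ∧ (c.2 + 1 < b → U (c.1 + 1) c.2 < U c.1 (c.2 + 1)) ∧
        slideNext a b U c = (c.1 + 1, c.2)) ∨
      (c.2 + 1 < b ∧ (c.1 + 1 < a → U c.1 (c.2 + 1) ≤ U (c.1 + 1) c.2) ∧
        slideNext a b U c = (c.1, c.2 + 1)) ∨
      (c.1 + 1 = a ∧ c.2 + 1 = b ∧ slideNext a b U c = c) := by
  unfold slideNext
  split_ifs with h1 h2 h3 h2
  · exact Or.inl ⟨h1, fun _ => h3, rfl⟩
  · exact Or.inr (Or.inl ⟨h2, fun _ => not_lt.mp h3, rfl⟩)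
  · exact Or.inl ⟨h1, fun h => absurd h h2, rfl⟩
  · exact Or.inr (Or.inl ⟨h2, fun h => absurd h h1, rfl⟩)
  · exact Or.inr (Or.inr ⟨by omega, by omega, rfl⟩)

lemma le_slideNext (c : ℕ × ℕ) : c ≤ slideNext a b U c := by
  obtain ⟨x, y⟩ := c
  unfold slideNext
  split_ifs <;> simp

lemma slidePath_monotone : Monotone (slidePath a b U) :=
  monotone_nat_of_le_succ fun t => slidePath_succ t ▸ le_slideNext _

lemma slideNext_mem {c : ℕ × ℕ} (hc1 : c.1 < a) (hc2 : c.2 < b) :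
    (slideNext a b U c).1 < a ∧ (slideNext a b U c).2 < b := by
  rcases slideNext_cases (U := U) hc1 hc2 with ⟨h, -, e⟩ | ⟨h, -, e⟩ | ⟨-, -, e⟩ <;>
    rw [e] <;> exact ⟨by omega, by omega⟩

lemma slidePath_mem (ha : 0 < a) (hb : 0 < b) (t : ℕ) :
    (slidePath a b U t).1 < a ∧ (slidePath a b U t).2 < b := by
  induction t with
  | zero => exact ⟨ha, hb⟩
  | succ t ih => rw [slidePath_succ]; exact slideNext_mem ih.1 ih.2

lemma slideNext_fst_add_snd {c : ℕ × ℕ} (hc1 : c.1 < a) (hc2 : c.2 < b)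
    (hc : c ≠ (a - 1, b - 1)) :
    (slideNext a b U c).1 + (slideNext a b U c).2 = c.1 + c.2 + 1 := by
  rcases slideNext_cases (U := U) hc1 hc2 with ⟨-, -, e⟩ | ⟨-, -, e⟩ | ⟨h1, h2, -⟩
  · rw [e]; omega
  · rw [e]; omega
  · exact absurd (Prod.ext (by omega) (by omega)) hc

lemma eq_corner_of_slideNext_eq_self {c : ℕ × ℕ} (hc1 : c.1 < a) (hc2 : c.2 < b)
    (h : slideNext a b U c = c) : c = (a - 1, b - 1) := by
  by_contra hc
  have := slideNext_fst_add_snd (U := U) hc1 hc2 hc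
  rw [h] at this
  omega

lemma slideNext_corner (ha : 0 < a) (hb : 0 < b) :
    slideNext a b U (a - 1, b - 1) = (a - 1, b - 1) := by
  rw [slideNext, if_neg (by simp; omega), if_neg (by simp; omega)]

lemma onSlidePath_corner (ha : 0 < a) (hb : 0 < b) : OnSlidePath a b U (a - 1, b - 1) := by
  have hsum : ∀ t ≤ a + b - 2, (slidePath a b U t).1 + (slidePath a b U t).2 = t := by
    intro t
    induction t with
    | zero => intro _; rfl
    | succ t ih =>
      intro ht
      have hmem := slidePath_mem (U := U) ha hb t
      rw [slidePath_succ, slideNext_fst_add_snd hmem.1 hmem.2, ih (by omega)]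
      intro hc
      have := ih (by omega)
      rw [hc] at this
      omega
  have hmem := slidePath_mem (U := U) ha hb (a + b - 2)
  have := hsum (a + b - 2) le_rfl
  exact ⟨a + b - 2, Prod.ext (by simp; omega) (by simp; omega)⟩

lemma slideNext_eq_of_fst_eq_succ {c : ℕ × ℕ} (h : (slideNext a b U c).1 = c.1 + 1) :
    slideNext a b U c = (c.1 + 1, c.2) := by
  obtain ⟨x, y⟩ := c
  unfold slideNext at h ⊢
  split_ifs at h ⊢ <;> simp at h ⊢

lemma eq_of_slidePath_fst_succ {s t : ℕ}
    (hs : (slidePath a b U (s + 1)).1 = (slidePath a b U s).1 + 1)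
    (ht : (slidePath a b U (t + 1)).1 = (slidePath a b U t).1 + 1)
    (hst : (slidePath a b U s).1 = (slidePath a b U t).1) : s = t := by
  by_contra hne
  rcases Nat.lt_or_gt_of_ne hne with h | h
  · have := (slidePath_monotone (a := a) (b := b) (U := U) (show s + 1 ≤ t from h)).1; omega
  · have := (slidePath_monotone (a := a) (b := b) (U := U) (show t + 1 ≤ s from h)).1; omega

lemma not_onSlidePath_of_step {s : ℕ} {d : ℕ × ℕ} (hd : ¬d ≤ slidePath a b U s)
    (hd' : ¬slidePath a b U (s + 1) ≤ d) : ¬OnSlidePath a b U d := by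
  rintro ⟨u, rfl⟩
  rcases le_or_gt u s with h | h
  · exact hd (slidePath_monotone h)
  · exact hd' (slidePath_monotone h)

end SlidePath

open Classical in
noncomputable def cellOf (a b : ℕ) (U : ℕ → ℕ → ℕ) (m : ℕ) : ℕ × ℕ :=
  if h : ∃ p : ℕ × ℕ, p.1 < a ∧ p.2 < b ∧ U p.1 p.2 = m then h.choose else (0, 0)

namespace IsSYT

variable {a b : ℕ} {U : ℕ → ℕ → ℕ}

lemma eq_of_entry_eq (hU : IsSYT a b U) {c d : ℕ × ℕ} (hc1 : c.1 < a) (hc2 : c.2 < b)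
    (hd1 : d.1 < a) (hd2 : d.2 < b) (h : U c.1 c.2 = U d.1 d.2) : c = d := by
  have hbd := hU.1 c.1 c.2 hc1 hc2
  exact (hU.2.1 _ hbd.1 hbd.2).unique ⟨hc1, hc2, rfl⟩ ⟨hd1, hd2, h.symm⟩

lemma cellOf_spec (hU : IsSYT a b U) {m : ℕ} (h1 : 1 ≤ m) (h2 : m ≤ a * b) :
    (cellOf a b U m).1 < a ∧ (cellOf a b U m).2 < b ∧
      U (cellOf a b U m).1 (cellOf a b U m).2 = m := by
  have hex := (hU.2.1 m h1 h2).exists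
  rw [cellOf, dif_pos hex]
  exact hex.choose_spec

lemma cellOf_eq (hU : IsSYT a b U) {c : ℕ × ℕ} (hc1 : c.1 < a) (hc2 : c.2 < b) :
    cellOf a b U (U c.1 c.2) = c := by
  have hbd := hU.1 c.1 c.2 hc1 hc2
  obtain ⟨h1, h2, h3⟩ := hU.cellOf_spec hbd.1 hbd.2
  exact hU.eq_of_entry_eq h1 h2 hc1 hc2 h3

lemma entry_le_entry (hU : IsSYT a b U) {c d : ℕ × ℕ} (hd1 : d.1 < a) (hd2 : d.2 < b)
    (h : c ≤ d) : U c.1 c.2 ≤ U d.1 d.2 := by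
  obtain ⟨h1, h2⟩ := Prod.mk_le_mk.mp h
  calc U c.1 c.2 ≤ U c.1 d.2 := by
        rcases h2.eq_or_lt with h2 | h2
        · rw [h2]
        · exact (hU.2.2.1 _ _ _ (by omega) h2 hd2).le
    _ ≤ U d.1 d.2 := by
        rcases h1.eq_or_lt with h1 | h1
        · rw [h1]
        · exact (hU.2.2.2 _ _ _ h1 hd1 hd2).le

lemma entry_lt_entry (hU : IsSYT a b U) {c d : ℕ × ℕ} (hd1 : d.1 < a) (hd2 : d.2 < b)
    (h : c ≤ d) (hne : c ≠ d) : U c.1 c.2 < U d.1 d.2 :=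
  (hU.entry_le_entry hd1 hd2 h).lt_of_ne fun heq =>
    hne (hU.eq_of_entry_eq (lt_of_le_of_lt h.1 hd1) (lt_of_le_of_lt h.2 hd2) hd1 hd2 heq)

lemma entry_origin (ha : 0 < a) (hb : 0 < b) (hU : IsSYT a b U) : U 0 0 = 1 := by
  obtain ⟨h1, h2, h3⟩ := hU.cellOf_spec le_rfl (Nat.mul_pos ha hb)
  have hle := hU.entry_le_entry h1 h2 (c := (0, 0))
    (Prod.mk_le_mk.mpr ⟨Nat.zero_le _, Nat.zero_le _⟩)
  rw [h3] at hle
  exact le_antisymm hle (hU.1 0 0 ha hb).1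

lemma two_le_entry (ha : 0 < a) (hb : 0 < b) (hU : IsSYT a b U) {c : ℕ × ℕ} (hc1 : c.1 < a)
    (hc2 : c.2 < b) (hc : c ≠ (0, 0)) : 2 ≤ U c.1 c.2 := by
  have := hU.entry_lt_entry hc1 hc2 (Prod.mk_le_mk.mpr ⟨Nat.zero_le c.1, Nat.zero_le c.2⟩) hc.symm
  rw [hU.entry_origin ha hb] at this
  exact this

lemma lt_slideNext (hU : IsSYT a b U) {c : ℕ × ℕ} (hc1 : c.1 < a) (hc2 : c.2 < b)
    (hc : c ≠ (a - 1, b - 1)) : U c.1 c.2 < U (slideNext a b U c).1 (slideNext a b U c).2 :=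
  have hmem := slideNext_mem (U := U) hc1 hc2
  hU.entry_lt_entry hmem.1 hmem.2 (le_slideNext c)
    fun h => hc (eq_corner_of_slideNext_eq_self hc1 hc2 h.symm)

end IsSYT

lemma isSYT_of_adjacent {a b : ℕ} {U : ℕ → ℕ → ℕ}
    (hbound : ∀ i j, i < a → j < b → 1 ≤ U i j ∧ U i j ≤ a * b)
    (hbij : ∀ k, 1 ≤ k → k ≤ a * b → ∃! p : ℕ × ℕ, p.1 < a ∧ p.2 < b ∧ U p.1 p.2 = k)
    (hrow : ∀ i j, i < a → j + 1 < b → U i j < U i (j + 1))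
    (hcol : ∀ i j, i + 1 < a → j < b → U i j < U (i + 1) j) : IsSYT a b U :=
  ⟨hbound, hbij,
    fun i j j' hi hj hj' => strictMonoOn_Iic_of_lt_succ (n := b - 1) (ψ := U i)
      (fun m hm => by simpa using hrow i m hi (by omega)) (by simp; omega) (by simp; omega) hj,
    fun i i' j hi hi' hj => strictMonoOn_Iic_of_lt_succ (n := a - 1) (ψ := (U · j))
      (fun m hm => by simpa using hcol m j (by omega) hj) (by simp; omega) (by simp; omega) hi⟩

open Classical in
noncomputable def promoSource (a b : ℕ) (U : ℕ → ℕ → ℕ) (c : ℕ × ℕ) : ℕ × ℕ :=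
  if OnSlidePath a b U c then slideNext a b U c else c

section PromoSource

variable {a b : ℕ} {U : ℕ → ℕ → ℕ}

lemma promoSource_of_onSlidePath {c : ℕ × ℕ} (h : OnSlidePath a b U c) :
    promoSource a b U c = slideNext a b U c := if_pos h

lemma promoSource_of_not_onSlidePath {c : ℕ × ℕ} (h : ¬OnSlidePath a b U c) :
    promoSource a b U c = c := if_neg h

lemma promo_corner (ha : 0 < a) (hb : 0 < b) : promo a b U (a - 1) (b - 1) = a * b := by
  rw [promo, if_pos ⟨by omega, by omega⟩, if_pos ⟨rfl, rfl⟩]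

lemma promo_eq_promoSource {c : ℕ × ℕ} (hc1 : c.1 < a) (hc2 : c.2 < b)
    (hc : c ≠ (a - 1, b - 1)) :
    promo a b U c.1 c.2 = U (promoSource a b U c).1 (promoSource a b U c).2 - 1 := by
  have hc' : ¬(c.1 = a - 1 ∧ c.2 = b - 1) := fun h => hc (Prod.ext h.1 h.2)
  rw [promo, if_pos ⟨hc1, hc2⟩, if_neg hc']
  unfold promoSource OnSlidePath slidePath
  split_ifs <;> rfl

lemma promoSource_mem {c : ℕ × ℕ} (hc1 : c.1 < a) (hc2 : c.2 < b) :
    (promoSource a b U c).1 < a ∧ (promoSource a b U c).2 < b := by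
  by_cases h : OnSlidePath a b U c
  · rw [promoSource_of_onSlidePath h]; exact slideNext_mem hc1 hc2
  · rw [promoSource_of_not_onSlidePath h]; exact ⟨hc1, hc2⟩

lemma promoSource_ne_origin {c : ℕ × ℕ} (hc1 : c.1 < a) (hc2 : c.2 < b)
    (hc : c ≠ (a - 1, b - 1)) : promoSource a b U c ≠ (0, 0) := by
  by_cases h : OnSlidePath a b U c
  · rw [promoSource_of_onSlidePath h]
    have := slideNext_fst_add_snd (U := U) hc1 hc2 hc
    intro h0
    rw [h0] at this
    simp at this
  · rw [promoSource_of_not_onSlidePath h]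
    rintro rfl
    exact h ⟨0, rfl⟩

lemma eq_of_slideNext_eq {c d : ℕ × ℕ} (hc : OnSlidePath a b U c) (hd : OnSlidePath a b U d)
    (hc1 : c.1 < a) (hc2 : c.2 < b) (hc' : c ≠ (a - 1, b - 1))
    (hd1 : d.1 < a) (hd2 : d.2 < b) (hd' : d ≠ (a - 1, b - 1))
    (h : slideNext a b U c = slideNext a b U d) : c = d := by
  obtain ⟨s, rfl⟩ := hc
  obtain ⟨u, rfl⟩ := hd
  wlog hsu : s ≤ u generalizing s u
  · exact (this u hd1 hd2 hd' s hc1 hc2 hc' h.symm (by omega)).symm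
  rcases hsu.eq_or_lt with rfl | hsu
  · rfl
  -- the path would have to stall at `slidePath u`, which only happens at the corner
  have hle : slidePath a b U (s + 1) ≤ slidePath a b U u := slidePath_monotone hsu
  rw [slidePath_succ, h] at hle
  exact absurd (eq_corner_of_slideNext_eq_self hd1 hd2
    (le_antisymm hle (le_slideNext _))) hd'

lemma promoSource_injOn {c d : ℕ × ℕ}
    (hc1 : c.1 < a) (hc2 : c.2 < b) (hc : c ≠ (a - 1, b - 1))
    (hd1 : d.1 < a) (hd2 : d.2 < b) (hd : d ≠ (a - 1, b - 1))
    (h : promoSource a b U c = promoSource a b U d) : c = d := by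
  by_cases hcp : OnSlidePath a b U c <;> by_cases hdp : OnSlidePath a b U d
  · rw [promoSource_of_onSlidePath hcp, promoSource_of_onSlidePath hdp] at h
    exact eq_of_slideNext_eq hcp hdp hc1 hc2 hc hd1 hd2 hd h
  · rw [promoSource_of_onSlidePath hcp, promoSource_of_not_onSlidePath hdp] at h
    obtain ⟨s, rfl⟩ := hcp
    exact absurd ⟨s + 1, by rw [slidePath_succ, h]⟩ hdp
  · rw [promoSource_of_not_onSlidePath hcp, promoSource_of_onSlidePath hdp] at h
    obtain ⟨u, rfl⟩ := hdp
    exact absurd ⟨u + 1, by rw [slidePath_succ, h]⟩ hcp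
  · rwa [promoSource_of_not_onSlidePath hcp, promoSource_of_not_onSlidePath hdp] at h

lemma exists_promoSource_eq (ha : 0 < a) (hb : 0 < b) {d : ℕ × ℕ} (hd1 : d.1 < a)
    (hd2 : d.2 < b) (hd : d ≠ (0, 0)) :
    ∃ c : ℕ × ℕ, c.1 < a ∧ c.2 < b ∧ c ≠ (a - 1, b - 1) ∧ promoSource a b U c = d := by
  classical
  by_cases hp : OnSlidePath a b U d
  · -- the cell visited just before the first visit of `d`
    obtain ⟨s, hprev, hnext⟩ : ∃ s, slidePath a b U s ≠ d ∧
        slideNext a b U (slidePath a b U s) = d := by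
      have hs : Nat.find hp ≠ 0 := fun h0 => hd (by rw [← Nat.find_spec hp, h0]; rfl)
      refine ⟨Nat.find hp - 1, Nat.find_min hp (by omega), ?_⟩
      rw [← slidePath_succ, Nat.sub_add_cancel (Nat.pos_of_ne_zero hs), Nat.find_spec hp]
    obtain ⟨hc1, hc2⟩ := slidePath_mem (U := U) ha hb s
    refine ⟨_, hc1, hc2, fun hcor => hprev ?_, ?_⟩
    · rw [← hnext, hcor, slideNext_corner ha hb]
    · rw [promoSource_of_onSlidePath ⟨_, rfl⟩, hnext]
  · refine ⟨d, hd1, hd2, fun hcor => hp (hcor ▸ onSlidePath_corner ha hb), ?_⟩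
    exact promoSource_of_not_onSlidePath hp

lemma self_le_promoSource (c : ℕ × ℕ) : c ≤ promoSource a b U c := by
  by_cases h : OnSlidePath a b U c
  · rw [promoSource_of_onSlidePath h]; exact le_slideNext c
  · rw [promoSource_of_not_onSlidePath h]

end PromoSource

namespace IsSYT

variable {a b : ℕ} {U : ℕ → ℕ → ℕ}

lemma le_promoSource (hU : IsSYT a b U) {c : ℕ × ℕ} (hc1 : c.1 < a) (hc2 : c.2 < b) :
    U c.1 c.2 ≤ U (promoSource a b U c).1 (promoSource a b U c).2 :=
  have hmem := promoSource_mem (U := U) hc1 hc2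
  hU.entry_le_entry hmem.1 hmem.2 (self_le_promoSource c)

lemma promoSource_lt_right (hU : IsSYT a b U) {x y : ℕ} (hx : x < a) (hy : y + 1 < b)
    (hc : (x, y + 1) ≠ (a - 1, b - 1)) :
    U (promoSource a b U (x, y)).1 (promoSource a b U (x, y)).2 <
      U (promoSource a b U (x, y + 1)).1 (promoSource a b U (x, y + 1)).2 := by
  by_cases hp : OnSlidePath a b U (x, y)
  · rw [promoSource_of_onSlidePath hp]
    obtain ⟨s, hs⟩ := hp
    rcases slideNext_cases (a := a) (b := b) (U := U) (c := (x, y)) hx (by omega) with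
      ⟨-, hlt, he⟩ | ⟨-, -, he⟩ | ⟨-, h2, -⟩
    · have hoff : ¬OnSlidePath a b U (x, y + 1) :=
        not_onSlidePath_of_step (s := s) (by simp [hs]) (by simp [slidePath_succ, hs, he])
      rw [he, promoSource_of_not_onSlidePath hoff]
      exact hlt hy
    · rw [he, promoSource_of_onSlidePath ⟨s + 1, by rw [slidePath_succ, hs, he]⟩]
      exact hU.lt_slideNext hx hy hc
    · simp only at h2; omega
  · rw [promoSource_of_not_onSlidePath hp]
    exact (hU.2.2.1 x y (y + 1) hx (by omega) hy).trans_le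
      (hU.le_promoSource (c := (x, y + 1)) hx hy)

lemma promoSource_lt_below (hU : IsSYT a b U) {x y : ℕ} (hx : x + 1 < a) (hy : y < b)
    (hc : (x + 1, y) ≠ (a - 1, b - 1)) :
    U (promoSource a b U (x, y)).1 (promoSource a b U (x, y)).2 <
      U (promoSource a b U (x + 1, y)).1 (promoSource a b U (x + 1, y)).2 := by
  by_cases hp : OnSlidePath a b U (x, y)
  · rw [promoSource_of_onSlidePath hp]
    obtain ⟨s, hs⟩ := hp
    rcases slideNext_cases (a := a) (b := b) (U := U) (c := (x, y)) (by omega) hy with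
      ⟨-, -, he⟩ | ⟨hy1, hle, he⟩ | ⟨h1, -, -⟩
    · rw [he, promoSource_of_onSlidePath ⟨s + 1, by rw [slidePath_succ, hs, he]⟩]
      exact hU.lt_slideNext hx hy hc
    · have hoff : ¬OnSlidePath a b U (x + 1, y) :=
        not_onSlidePath_of_step (s := s) (by simp [hs]) (by simp [slidePath_succ, hs, he])
      rw [he, promoSource_of_not_onSlidePath hoff]
      refine (hle hx).lt_of_ne fun h => ?_
      have := hU.eq_of_entry_eq (c := (x, y + 1)) (d := (x + 1, y)) (by omega) hy1 hx hy h
      simp at this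
    · simp only at h1; omega
  · rw [promoSource_of_not_onSlidePath hp]
    exact (hU.2.2.2 x (x + 1) y (by omega) hx hy).trans_le
      (hU.le_promoSource (c := (x + 1, y)) hx hy)

lemma promoSource_entry_mem (ha : 0 < a) (hb : 0 < b) (hU : IsSYT a b U) {c : ℕ × ℕ}
    (hc1 : c.1 < a) (hc2 : c.2 < b) (hc : c ≠ (a - 1, b - 1)) :
    2 ≤ U (promoSource a b U c).1 (promoSource a b U c).2 ∧
      U (promoSource a b U c).1 (promoSource a b U c).2 ≤ a * b :=
  have hmem := promoSource_mem (U := U) hc1 hc2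
  ⟨hU.two_le_entry ha hb hmem.1 hmem.2 (promoSource_ne_origin hc1 hc2 hc),
    (hU.1 _ _ hmem.1 hmem.2).2⟩

lemma promo_lt_promo (ha : 0 < a) (hb : 0 < b) (hU : IsSYT a b U) {c d : ℕ × ℕ}
    (hc1 : c.1 < a) (hc2 : c.2 < b) (hc : c ≠ (a - 1, b - 1)) (hd1 : d.1 < a) (hd2 : d.2 < b)
    (h : d ≠ (a - 1, b - 1) →
      U (promoSource a b U c).1 (promoSource a b U c).2 <
        U (promoSource a b U d).1 (promoSource a b U d).2) :
    promo a b U c.1 c.2 < promo a b U d.1 d.2 := by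
  have hcv := hU.promoSource_entry_mem ha hb hc1 hc2 hc
  rw [promo_eq_promoSource hc1 hc2 hc]
  by_cases hd : d = (a - 1, b - 1)
  · rw [hd, promo_corner ha hb]; omega
  · rw [promo_eq_promoSource hd1 hd2 hd]; have := h hd; omega

end IsSYT

section Promo

variable {a b : ℕ} {U : ℕ → ℕ → ℕ}

theorem isSYT_promo (ha : 0 < a) (hb : 0 < b) (hU : IsSYT a b U) : IsSYT a b (promo a b U) := by
  have hcorner : (a - 1, b - 1).1 < a ∧ (a - 1, b - 1).2 < b := ⟨by simp; omega, by simp; omega⟩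
  have hval : ∀ c : ℕ × ℕ, c.1 < a → c.2 < b → c ≠ (a - 1, b - 1) →
      promo a b U c.1 c.2 = U (promoSource a b U c).1 (promoSource a b U c).2 - 1 ∧
        2 ≤ U (promoSource a b U c).1 (promoSource a b U c).2 ∧
        U (promoSource a b U c).1 (promoSource a b U c).2 ≤ a * b :=
    fun c hc1 hc2 hc => ⟨promo_eq_promoSource hc1 hc2 hc, hU.promoSource_entry_mem ha hb hc1 hc2 hc⟩
  refine isSYT_of_adjacent (fun x y hx hy => ?_) (fun k hk1 hk2 => ?_)
    (fun x y hx hy => hU.promo_lt_promo ha hb (c := (x, y)) (d := (x, y + 1)) hx (by omega)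
      (by simp; omega) hx hy (hU.promoSource_lt_right hx hy))
    (fun x y hx hy => hU.promo_lt_promo ha hb (c := (x, y)) (d := (x + 1, y)) (by omega) hy
      (by simp; omega) hx hy (hU.promoSource_lt_below hx hy))
  · by_cases hc : (x, y) = (a - 1, b - 1)
    · obtain ⟨rfl, rfl⟩ := Prod.mk.inj hc
      rw [promo_corner ha hb]
      exact ⟨Nat.mul_pos ha hb, le_rfl⟩
    · have := hval (x, y) hx hy hc
      simp only at this
      omega
  · rcases hk2.lt_or_eq with hk | rfl
    · obtain ⟨hd1, hd2, hdv⟩ := hU.cellOf_spec (m := k + 1) (by omega) hk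
      have hd0 : cellOf a b U (k + 1) ≠ (0, 0) := fun h => by
        rw [h, hU.entry_origin ha hb] at hdv; omega
      obtain ⟨c, hc1, hc2, hc, hcd⟩ := exists_promoSource_eq (U := U) ha hb hd1 hd2 hd0
      refine ⟨c, ⟨hc1, hc2, ?_⟩, fun p ⟨hp1, hp2, hpk⟩ => ?_⟩
      · rw [(hval c hc1 hc2 hc).1, hcd, hdv]; rfl
      · have hp : p ≠ (a - 1, b - 1) := by
          rintro rfl; rw [promo_corner ha hb] at hpk; omega
        have hpv := hval p hp1 hp2 hp
        have hsrc : promoSource a b U p = cellOf a b U (k + 1) :=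
          hU.eq_of_entry_eq (promoSource_mem hp1 hp2).1 (promoSource_mem hp1 hp2).2 hd1 hd2
            (by omega)
        exact promoSource_injOn hp1 hp2 hp hc1 hc2 hc (hsrc.trans hcd.symm)
    · refine ⟨(a - 1, b - 1), ⟨hcorner.1, hcorner.2, promo_corner ha hb⟩,
        fun p ⟨hp1, hp2, hpk⟩ => ?_⟩
      by_contra hp
      have := hval p hp1 hp2 hp
      omega

theorem isSYT_iterate_promo (ha : 0 < a) (hb : 0 < b) (hU : IsSYT a b U) :
    ∀ k, IsSYT a b ((promo a b)^[k] U)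
  | 0 => hU
  | k + 1 => by
    rw [Function.iterate_succ_apply']
    exact isSYT_promo ha hb (isSYT_iterate_promo ha hb hU k)

end Promo

lemma exists_promo_eq_pred {a b : ℕ} {U : ℕ → ℕ → ℕ} (ha : 0 < a) (hb : 0 < b) {d : ℕ × ℕ}
    (hd1 : d.1 < a) (hd2 : d.2 < b) (hd : d ≠ (0, 0)) :
    ∃ p : ℕ × ℕ, p.1 < a ∧ p.2 < b ∧ promo a b U p.1 p.2 = U d.1 d.2 - 1 ∧
      (p.1 = d.1 ∨ (OnSlidePath a b U p ∧ slideNext a b U p = d ∧ p.1 + 1 = d.1)) := by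
  obtain ⟨p, hp1, hp2, hp, hpd⟩ := exists_promoSource_eq (U := U) ha hb hd1 hd2 hd
  refine ⟨p, hp1, hp2, by rw [promo_eq_promoSource hp1 hp2 hp, hpd], ?_⟩
  by_cases hpath : OnSlidePath a b U p
  · rw [promoSource_of_onSlidePath hpath] at hpd
    rcases slideNext_cases (U := U) hp1 hp2 with ⟨-, -, he⟩ | ⟨-, -, he⟩ | ⟨-, -, he⟩
    · exact Or.inr ⟨hpath, hpd, by rw [← hpd, he]⟩
    · exact Or.inl (by rw [← hpd, he])
    · exact absurd (eq_corner_of_slideNext_eq_self hp1 hp2 he) hp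
  · rw [promoSource_of_not_onSlidePath hpath] at hpd
    exact Or.inl (by rw [hpd])

/-- Where the entry `e` of `T` has travelled after `k` promotions, each of which lowers it
by one. -/
noncomputable def trackedCell (a b : ℕ) (T : ℕ → ℕ → ℕ) (e k : ℕ) : ℕ × ℕ :=
  cellOf a b ((promo a b)^[k] T) (e - k)

section TrackedCell

variable {a b e : ℕ} {T : ℕ → ℕ → ℕ}

lemma trackedCell_spec (ha : 0 < a) (hb : 0 < b) (hT : IsSYT a b T) (he : e ≤ a * b) {k : ℕ}
    (hk : k < e) :
    (trackedCell a b T e k).1 < a ∧ (trackedCell a b T e k).2 < b ∧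
      ((promo a b)^[k] T) (trackedCell a b T e k).1 (trackedCell a b T e k).2 = e - k :=
  (isSYT_iterate_promo ha hb hT k).cellOf_spec (by omega) (by omega)

lemma trackedCell_last (ha : 0 < a) (hb : 0 < b) (hT : IsSYT a b T) (he : 1 ≤ e) :
    trackedCell a b T e (e - 1) = (0, 0) := by
  have hU := isSYT_iterate_promo ha hb hT (e - 1)
  have h1 : e - (e - 1) = ((promo a b)^[e - 1] T) 0 0 := by rw [hU.entry_origin ha hb]; omega
  rw [trackedCell, h1]
  exact hU.cellOf_eq (c := (0, 0)) ha hb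

lemma trackedCell_step (ha : 0 < a) (hb : 0 < b) (hT : IsSYT a b T) (he : e ≤ a * b) {k : ℕ}
    (hk : k + 1 < e) :
    (trackedCell a b T e (k + 1)).1 = (trackedCell a b T e k).1 ∨
      (OnSlidePath a b ((promo a b)^[k] T) (trackedCell a b T e (k + 1)) ∧
        slideNext a b ((promo a b)^[k] T) (trackedCell a b T e (k + 1)) = trackedCell a b T e k ∧
        (trackedCell a b T e (k + 1)).1 + 1 = (trackedCell a b T e k).1) := by
  have hU := isSYT_iterate_promo ha hb hT k
  obtain ⟨hd1, hd2, hdv⟩ := trackedCell_spec ha hb hT he (k := k) (by omega)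
  have hd0 : trackedCell a b T e k ≠ (0, 0) := fun h => by
    rw [h, hU.entry_origin ha hb] at hdv; omega
  obtain ⟨p, hp1, hp2, hpv, hp⟩ := exists_promo_eq_pred ha hb hd1 hd2 hd0
  have hnext : trackedCell a b T e (k + 1) = p := by
    rw [trackedCell, Function.iterate_succ_apply', show e - (k + 1) = e - k - 1 by omega,
      ← hdv, ← hpv]
    exact (isSYT_promo ha hb hU).cellOf_eq hp1 hp2
  rw [hnext]
  exact hp

end TrackedCell

lemma le_apply_zero_of_succ_le {f : ℕ → ℕ} {n : ℕ} (hstep : ∀ k < n, f (k + 1) ≤ f k) :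
    ∀ k ≤ n, f k ≤ f 0
  | 0, _ => le_rfl
  | k + 1, hk => (hstep k hk).trans (le_apply_zero_of_succ_le hstep k (by omega))

lemma exists_drop_of_step {f : ℕ → ℕ} {i : ℕ} :
    ∀ n, (∀ k < n, f (k + 1) = f k ∨ f (k + 1) + 1 = f k) → i ≤ f 0 → f n < i →
      ∃ k < n, f k = i ∧ f (k + 1) + 1 = i
  | 0, _, h0, hn => absurd h0 (not_le.mpr hn)
  | n + 1, hstep, h0, hn => by
    by_cases hfn : f n < i
    · obtain ⟨k, hk, hki⟩ := exists_drop_of_step n (fun k hk => hstep k (by omega)) h0 hfn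
      exact ⟨k, by omega, hki⟩
    · rcases hstep n (by omega) with h | h
      · omega
      · exact ⟨n, by omega, by omega, by omega⟩

lemma Nat.ModEq.eq_of_lt_add_of_lt_add {n x y : ℕ} (h : x ≡ y [MOD n]) (hx : x < y + n)
    (hy : y < x + n) : x = y :=
  h.eq_of_abs_lt (abs_sub_lt_iff.mpr ⟨by omega, by omega⟩)

section PromoPermSpec

variable {a b i : ℕ} {T : ℕ → ℕ → ℕ} {σ : ℕ → ℕ}

lemma promoPermSpec.exists_slidePath (hσ : promoPermSpec a b i T σ) {j : ℕ}
    (hj : j ∈ Set.Icc 1 (a * b)) :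
    ∃ t, (slidePath a b ((promo a b)^[j - 1] T) t).1 + 1 = i ∧
      slideNext a b ((promo a b)^[j - 1] T) (slidePath a b ((promo a b)^[j - 1] T) t) =
        (i, (slidePath a b ((promo a b)^[j - 1] T) t).2) ∧
      σ j ≡ ((promo a b)^[j - 1] T) i (slidePath a b ((promo a b)^[j - 1] T) t).2 + j - 1
        [MOD a * b] := by
  obtain ⟨t, hdown, hrow, hmod⟩ := hσ.2 j hj
  refine ⟨t, hrow, ?_, hmod⟩
  rw [slidePath, slideNext_eq_of_fst_eq_succ hdown, hrow]

lemma promoPermSpec.apply_succ_eq_of_trackedCell (ha : 0 < a) (hb : 0 < b) (hT : IsSYT a b T)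
    (hσ : promoPermSpec a b i T σ) {e k : ℕ} (he : e ≤ a * b) (hk : k + 1 < e)
    (hrow : (trackedCell a b T e k).1 = i)
    (hdrop : (trackedCell a b T e (k + 1)).1 + 1 = i) : σ (k + 1) = e := by
  rcases trackedCell_step ha hb hT he hk with hflat | ⟨⟨t, ht⟩, hnext, -⟩
  · omega
  obtain ⟨t', hrow', hnext', hmod⟩ := hσ.exists_slidePath (j := k + 1) ⟨by omega, by omega⟩
  simp only [Nat.add_sub_cancel] at hrow' hnext' hmod
  -- the slide path leaves row `i - 1` only once, so the entry carried up is `e - k`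
  obtain rfl : t' = t := eq_of_slidePath_fst_succ
    (by rw [slidePath_succ, hnext']; exact hrow'.symm)
    (by rw [slidePath_succ, ht, hnext, hrow, hdrop])
    (by rw [ht]; omega)
  have hcell : trackedCell a b T e k = (i, (slidePath a b ((promo a b)^[k] T) t').2) := by
    rw [← hnext, ← ht, hnext']
  have hval := (trackedCell_spec ha hb hT he (k := k) (by omega)).2.2
  rw [hcell] at hval
  rw [hval, show e - k + (k + 1) - 1 = e by omega] at hmod
  have hσk := hσ.1.mapsTo (show k + 1 ∈ Set.Icc 1 (a * b) from ⟨by omega, by omega⟩)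
  exact hmod.eq_of_lt_add_of_lt_add (by simp at hσk; omega) (by simp at hσk; omega)

lemma promoPermSpec.exists_entry_of_apply_lt (hT : IsSYT a b T) (hσ : promoPermSpec a b i T σ)
    {j : ℕ} (hj : j ∈ Set.Icc 1 (a * b)) (hlt : σ j < j) : ∃ r < i, ∃ c < b, T r c = σ j := by
  have hab : 0 < a * b := hj.1.trans hj.2
  have ha : 0 < a := Nat.pos_of_mul_pos_right hab
  have hb : 0 < b := Nat.pos_of_mul_pos_left hab
  obtain ⟨t, hrow, -, -⟩ := hσ.exists_slidePath hj
  obtain ⟨he1, he2⟩ := hσ.1.mapsTo hj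
  obtain ⟨hc1, hc2, hcv⟩ := hT.cellOf_spec he1 he2
  refine ⟨_, ?_, _, hc2, hcv⟩
  by_contra! hci
  -- the entry `σ j` ends in row `0`, so on its way up it is carried from row `i` to row `i - 1`
  obtain ⟨k, hk, hki, hdrop⟩ := exists_drop_of_step
    (f := fun k => (trackedCell a b T (σ j) k).1) (σ j - 1)
    (fun k hk => (trackedCell_step ha hb hT he2 (by omega)).imp_right fun h => h.2.2) hci
    (by simp only [trackedCell_last ha hb hT he1]; omega)
  have hσk := hσ.apply_succ_eq_of_trackedCell ha hb hT he2 (by omega) hki hdrop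
  have := hσ.1.injOn (⟨by omega, by omega⟩ : k + 1 ∈ Set.Icc 1 (a * b)) hj hσk
  omega

lemma promoPermSpec.lt_of_pos (ha : 0 < a) (hb : 0 < b) (hσ : promoPermSpec a b i T σ) :
    i < a := by
  obtain ⟨t, -, hnext, -⟩ := hσ.exists_slidePath (j := 1) ⟨le_rfl, Nat.mul_pos ha hb⟩
  have hmem := slidePath_mem (U := (promo a b)^[1 - 1] T) ha hb t
  have := (slideNext_mem (U := (promo a b)^[1 - 1] T) hmem.1 hmem.2).1
  rwa [hnext] at this

lemma promoPermSpec.lt_of_apply_eq_entry (hT : IsSYT a b T) (hσ : promoPermSpec a b i T σ)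
    (hia : i < a) {r c j : ℕ} (hr : r < i) (hc : c < b) (hj : j ∈ Set.Icc 1 (a * b))
    (hσj : σ j = T r c) : T r c < j := by
  have ha : 0 < a := by omega
  have hb : 0 < b := by omega
  obtain ⟨hj1, hj2⟩ := hj
  have he := hT.1 r c (by omega) hc
  by_contra! hle
  obtain ⟨t, -, -, hmod⟩ := hσ.exists_slidePath ⟨hj1, hj2⟩
  set U := (promo a b)^[j - 1] T
  set col := (slidePath a b U t).2
  have hU : IsSYT a b U := isSYT_iterate_promo ha hb hT (j - 1)
  have hcol : col < b := (slidePath_mem ha hb t).2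
  have hp := hU.1 i col hia hcol
  rw [hσj] at hmod
  have hpe := hmod.eq_of_lt_add_of_lt_add (by omega) (by omega)
  -- after `j - 1` promotions the entry `T r c` has reached row `i > r`, but entries never move down
  have hcell : trackedCell a b T (T r c) (j - 1) = (i, col) := by
    rw [trackedCell, show T r c - (j - 1) = U i col by omega]
    exact hU.cellOf_eq (c := (i, col)) hia hcol
  have hstart : trackedCell a b T (T r c) 0 = (r, c) := hT.cellOf_eq (c := (r, c)) (by omega) hc
  have := le_apply_zero_of_succ_le (f := fun k => (trackedCell a b T (T r c) k).1)
    (n := T r c - 1) (fun k hk => by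
      rcases trackedCell_step ha hb hT he.2 (k := k) (by omega) with h | h <;> omega)
    (j - 1) (by omega)
  simp only [hcell, hstart] at this
  omega

theorem promoPermSpec.antiExceedance (ha : 0 < a) (hT : IsSYT a b T)
    (hσ : promoPermSpec a b i T σ) (e : ℕ) :
    (∃ j ∈ Set.Icc 1 (a * b), σ j = e ∧ e < j) ↔ (∃ r < i, ∃ c < b, T r c = e) := by
  constructor
  · rintro ⟨j, hj, rfl, hlt⟩
    exact hσ.exists_entry_of_apply_lt hT hj hlt
  · rintro ⟨r, hr, c, hc, rfl⟩
    have hia := hσ.lt_of_pos ha (by omega)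
    obtain ⟨j, hj, hσj⟩ := hσ.1.surjOn (show T r c ∈ Set.Icc 1 (a * b) from hT.1 r c (by omega) hc)
    exact ⟨j, hj, hσj, hσ.lt_of_apply_eq_entry hT hia hr hc hj hσj⟩

end PromoPermSpec

theorem promoPerm_antiExceedance_general (b i : ℕ)
    (T : ℕ → ℕ → ℕ) (hT : IsSYT 4 b T)
    (σ : ℕ → ℕ) (hσ : promoPermSpec 4 b i T σ) :
    ∀ e : ℕ, (∃ j ∈ Set.Icc 1 (4 * b), σ j = e ∧ e < j) ↔
      (∃ r < i, ∃ c < b, T r c = e) :=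
  hσ.antiExceedance (by norm_num) hT

/-- **(GPPSS, Theorem 4.7(4).)**  For a standard Young tableau `T` of shape `4 × b` and
`1 ≤ i ≤ 3`, the anti-exceedance set of the `i`-th promotion permutation,
`Aexc(prom_i(T)) = { e : prom_i(T)⁻¹(e) > e }`, equals the set of entries of `T` lying
in the first `i` rows (rows `0,…,i−1` in 0-indexed coordinates). -/
theorem promoPerm_antiExceedance (b i : ℕ) (hi1 : 1 ≤ i) (hi3 : i ≤ 3)
    (T : ℕ → ℕ → ℕ) (hT : IsSYT 4 b T)
    (σ : ℕ → ℕ) (hσ : promoPermSpec 4 b i T σ) :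
    ∀ e : ℕ, (∃ j ∈ Set.Icc 1 (4 * b), σ j = e ∧ e < j) ↔
      (∃ r < i, ∃ c < b, T r c = e) :=
  promoPerm_antiExceedance_general b i T hT σ hσ
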